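/- arXiv:2010.01883 — 2 statements merged into one kernel-verified Lean document; each statement's English description precedes it below -/
import Mathlib

section
/- Let Ω be a domain starlike at infinity. Then NP(Ω) = ℂ if and only if the set {Re z : z ∈ Ω} is unbounded both from above and from below. -/
open Complex Set

def StarlikeAtInf (Ω : Set ℂ) : Prop :=
  ∀ z ∈ Ω, ∀ t : ℝ, 0 ≤ t → z + t * I ∈ Ω

def NP (Ω : Set ℂ) : Set ℂ :=
  {p | ∃ t₀ : ℝ, 0 ≤ t₀ ∧ ∀ t : ℝ, t₀ < t → p + t * I ∈ Ω}

theorem stmt_7 (Ω : Set ℂ) (hopen : IsOpen Ω) (hconn : IsConnected Ω)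
    (hstar : StarlikeAtInf Ω) :
    NP Ω = Set.univ ↔
      ¬ BddAbove (Complex.re '' Ω) ∧ ¬ BddBelow (Complex.re '' Ω) := by
  constructor
  · intro h
    constructor
    · rintro ⟨M, hM⟩
      have hp : ((M + 1 : ℝ) : ℂ) ∈ NP Ω := h ▸ mem_univ _
      obtain ⟨t₀, ht₀, hT⟩ := hp
      have hmem := hT (t₀ + 1) (by linarith)
      have : re (((M + 1 : ℝ) : ℂ) + (t₀ + 1 : ℝ) * I) ≤ M :=
        hM ⟨_, hmem, rfl⟩
      simp [Complex.add_re, Complex.mul_re] at this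
      linarith
    · rintro ⟨M, hM⟩
      have hp : ((M - 1 : ℝ) : ℂ) ∈ NP Ω := h ▸ mem_univ _
      obtain ⟨t₀, ht₀, hT⟩ := hp
      have hmem := hT (t₀ + 1) (by linarith)
      have : M ≤ re (((M - 1 : ℝ) : ℂ) + (t₀ + 1 : ℝ) * I) :=
        hM ⟨_, hmem, rfl⟩
      simp [Complex.add_re, Complex.mul_re] at this
      linarith
  · rintro ⟨ha, hb⟩
    ext p
    simp only [mem_univ, iff_true]
    obtain ⟨y, hy, hpy⟩ := not_bddAbove_iff.mp ha p.re
    obtain ⟨x, hx, hxp⟩ := not_bddBelow_iff.mp hb p.re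
    have hconn' : IsPreconnected (re '' Ω) :=
      hconn.isPreconnected.image _ Complex.continuous_re.continuousOn
    have hmem : p.re ∈ re '' Ω :=
      hconn'.ordConnected.out hx hy ⟨hxp.le, hpy.le⟩
    obtain ⟨z, hz, hzre⟩ := hmem
    refine ⟨max 0 (z.im - p.im), le_max_left _ _, fun t ht => ?_⟩
    have hs : (0:ℝ) ≤ p.im + t - z.im := by
      have := lt_of_le_of_lt (le_max_right 0 (z.im - p.im)) ht; linarith
    have hmem2 := hstar z hz (p.im + t - z.im) hs
    have heq : z + ((p.im + t - z.im : ℝ) : ℂ) * I = p + (t : ℝ) * I := by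
      apply Complex.ext <;> simp [hzre] <;> ring
    rwa [heq] at hmem2
end

section
/- For n ∈ ℕ with n ≥ 1, set t_n := n!, γ := √2/2, and y_n := √(t_{n+1}² − t_n²γ²). Then y_{n+1} − 1 > t_{n+1} for all n ≥ 1, and the point t_n γ + i y_n lies on the circle of radius t_{n+1} centered at the origin; moreover, with θ_n := (1 − √(1 − 1/(2(n+1)²)))·4(n+1)², one has θ_n → 1 as n → ∞. -/
open Complex

noncomputable def tseq (n : ℕ) : ℝ := (Nat.factorial n : ℝ)

noncomputable def yseq (n : ℕ) : ℝ :=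
  Real.sqrt (tseq (n + 1) ^ 2 - tseq n ^ 2 * (Real.sqrt 2 / 2) ^ 2)

/-!
Since `yseq n ^ 2 = ((n + 1) ^ 2 - 1 / 2) * tseq n ^ 2`, `yseq n` is roughly
`(n + 1) * tseq n`, well above `tseq n + 1` once `n ≥ 2`; and `yseq n` is by construction the
second leg of a right triangle with hypotenuse `tseq (n + 1)` and first leg `tseq n * √2 / 2`.
The limit is the derivative of `u ↦ √(1 - u)` at `0`, namely `-1/2`, evaluated along
`u = 1 / (2 (n + 1) ^ 2)`, since `4 (n + 1) ^ 2 = 2 / u`.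
-/

open Filter Topology

lemma sqrt_two_div_two_sq : (Real.sqrt 2 / 2) ^ 2 = 1 / 2 := by
  rw [div_pow, Real.sq_sqrt zero_le_two]
  norm_num

lemma tseq_succ (n : ℕ) : tseq (n + 1) = (n + 1) * tseq n := by
  simp [tseq, Nat.factorial_succ]

lemma tseq_pos (n : ℕ) : 0 < tseq n := by
  unfold tseq
  positivity

lemma tseq_le_tseq_succ (n : ℕ) : tseq n ≤ tseq (n + 1) := by
  unfold tseq
  exact_mod_cast Nat.factorial_le n.le_succ

lemma norm_ofReal_add_sqrt_sq_sub_sq_mul_I {a r : ℝ} (hr : 0 ≤ r) (h : a ^ 2 ≤ r ^ 2) :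
    ‖(a : ℂ) + Real.sqrt (r ^ 2 - a ^ 2) * I‖ = r := by
  rw [norm_add_mul_I, Real.sq_sqrt (sub_nonneg.mpr h), add_sub_cancel, Real.sqrt_sq hr]

lemma norm_tseq_mul_add_yseq_mul_I (n : ℕ) :
    ‖((tseq n * (Real.sqrt 2 / 2) : ℝ) + yseq n * I : ℂ)‖ = tseq (n + 1) := by
  have h : (tseq n * (Real.sqrt 2 / 2)) ^ 2 ≤ tseq (n + 1) ^ 2 := by
    rw [mul_pow, sqrt_two_div_two_sq]
    nlinarith [tseq_pos n, tseq_le_tseq_succ n]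
  rw [yseq, ← mul_pow]
  exact norm_ofReal_add_sqrt_sq_sub_sq_mul_I (tseq_pos (n + 1)).le h

lemma tseq_lt_yseq_sub_one {n : ℕ} (hn : 2 ≤ n) : tseq n < yseq n - 1 := by
  have hn' : (2 : ℝ) ≤ n := by exact_mod_cast hn
  have ht : (n : ℝ) ≤ tseq n := by unfold tseq; exact_mod_cast Nat.self_le_factorial n
  rw [lt_sub_iff_add_lt, yseq, Real.lt_sqrt (by linarith), tseq_succ, sqrt_two_div_two_sq]
  -- `(t + 1) ^ 2 ≤ (3 t / 2) ^ 2` for `t ≥ 2`, while the right side is at least `17 t ^ 2 / 2`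
  nlinarith [mul_le_mul hn' hn' zero_le_two (by linarith : (0 : ℝ) ≤ n)]

lemma tendsto_one_sub_sqrt_one_sub_div :
    Tendsto (fun u : ℝ => (1 - Real.sqrt (1 - u)) / u) (𝓝[≠] 0) (𝓝 (1 / 2)) := by
  have hd : HasDerivAt (fun u : ℝ => Real.sqrt (1 - u)) (-(1 / 2)) 0 := by
    convert ((hasDerivAt_id' (0 : ℝ)).const_sub 1).sqrt (by norm_num) using 1
    norm_num
  have := (hasDerivAt_iff_tendsto_slope_zero.mp hd).neg
  simp only [zero_add, sub_zero, Real.sqrt_one, neg_neg, smul_eq_mul] at this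
  refine this.congr fun u => ?_
  rw [div_eq_inv_mul, ← mul_neg, neg_sub]

theorem stmt_19 :
    (∀ n : ℕ, 1 ≤ n → tseq (n + 1) < yseq (n + 1) - 1) ∧
    (∀ n : ℕ, 1 ≤ n →
      ‖((tseq n * (Real.sqrt 2 / 2) : ℝ) + yseq n * I : ℂ)‖ = tseq (n + 1)) ∧
    Filter.Tendsto
      (fun n : ℕ => (1 - Real.sqrt (1 - 1 / (2 * (n + 1) ^ 2))) * (4 * (n + 1) ^ 2))
      Filter.atTop (nhds 1) := by
  refine ⟨fun n hn => tseq_lt_yseq_sub_one (by omega),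
    fun n _ => norm_tseq_mul_add_yseq_mul_I n, ?_⟩
  set u : ℕ → ℝ := fun n => 1 / (2 * (n + 1) ^ 2)
  have hu : Tendsto u atTop (𝓝[≠] 0) := by
    refine tendsto_nhdsWithin_of_tendsto_nhds_of_eventually_within _ ?_
      (Eventually.of_forall fun n => (one_div_pos.mpr (by positivity)).ne')
    simp only [u, one_div]
    refine tendsto_inv_atTop_zero.comp <|
      tendsto_atTop_mono (fun n => ?_) tendsto_natCast_atTop_atTop
    nlinarith [(Nat.cast_nonneg n : (0 : ℝ) ≤ n)]
  have hlim := (tendsto_one_sub_sqrt_one_sub_div.comp hu).const_mul 2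
  rw [mul_one_div_cancel two_ne_zero] at hlim
  refine hlim.congr fun n => ?_
  simp only [u, Function.comp_apply]
  field_simp
  ring
end
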